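/- In a normal topometric space X, every finite c-Lipschitz approximation {(F_α,G_α) : α ∈ S} (S ⊆ ℝ finite, F_α, G_α closed, F_α ∪ G_α = X, and d(F_α,G_β)·c > β−α for α < β in S) approximates some continuous c-Lipschitz function f : X → ℝ with values in the convex hull I of S; that is, f ≤ α on F_α and f ≥ α on G_α for all α ∈ S. -/

import Mathlib

open scoped ENNReal NNReal
open Set

structure TopometricOn (X : Type*) [TopologicalSpace X] where
  d : X → X → ℝ≥0∞
  d_self : ∀ x, d x x = 0
  eq_of_d_eq_zero : ∀ x y, d x y = 0 → x = y
  d_symm : ∀ x y, d x y = d y x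
  d_triangle : ∀ x y z, d x z ≤ d x y + d y z
  lsc : LowerSemicontinuous fun p : X × X => d p.1 p.2
  refines : ∀ U : Set X, IsOpen U → ∀ x ∈ U, ∃ ε > (0 : ℝ≥0∞), ∀ y, d x y < ε → y ∈ U

namespace TopometricOn

variable {X : Type*} [TopologicalSpace X]

noncomputable def setD (T : TopometricOn X) (F G : Set X) : ℝ≥0∞ :=
  ⨅ x ∈ F, ⨅ y ∈ G, T.d x y

noncomputable def ptD (T : TopometricOn X) (x : X) (F : Set X) : ℝ≥0∞ :=
  ⨅ y ∈ F, T.d x y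

def IsNormal (T : TopometricOn X) : Prop :=
  (∀ F G : Set X, IsClosed F → IsClosed G → 0 < T.setD F G →
      ∃ U V : Set X, IsOpen U ∧ IsOpen V ∧ F ⊆ U ∧ G ⊆ V ∧ Disjoint U V) ∧
  (∀ F : Set X, IsClosed F → ∀ r : ℝ≥0∞, 0 < r → IsClosed {x | T.ptD x F ≤ r})

end TopometricOn

/-!
Levels are added one at a time. To add a level `γ` to a finite approximation, thicken each `F δ`
(`δ < γ`) and each `G δ` (`δ > γ`) to its closed neighbourhood of radius `|γ - δ| / c + ε`.
For small `ε > 0` the union `P` of the lower neighbourhoods and the union `Q` of the upper ones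
are still at distance `≥ ε`, so normality gives disjoint open `U ⊇ P`, `V ⊇ Q`, and
`F γ := Vᶜ`, `G γ := Uᶜ` satisfy the approximation inequalities. Adding a countable dense set of
levels of `[min S, max S]` this way, and passing to the union, gives a dense approximation. Then
`f x := inf {α | x ∈ F α}` works: the sets `F α`, `G α` are closed and cover `X`, which gives
continuity, and `x ∈ F α`, `y ∈ G β` force `β - α < c d(x, y)`, which gives the Lipschitz bound.
-/

open Filter Topology

theorem ENNReal.exists_pos_forall_add_mul_lt {ι : Type*} {s : Set ι} (hs : s.Finite)
    {a b : ι → ℝ≥0∞} (hab : ∀ i ∈ s, a i < b i) {k : ℝ≥0∞} (hk : k ≠ ∞) :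
    ∃ ε : ℝ≥0, 0 < ε ∧ ∀ i ∈ s, a i + k * ε < b i := by
  have h : ∀ᶠ ε : ℝ≥0 in 𝓝[>] 0, ∀ i ∈ s, a i + k * ε < b i := by
    refine (hs.eventually_all).2 fun i hi => nhdsWithin_le_nhds ?_
    have : Tendsto (fun ε : ℝ≥0 => a i + k * ε) (𝓝 0) (𝓝 (a i)) := by
      simpa using (ENNReal.Tendsto.const_mul (ENNReal.tendsto_coe.2 (tendsto_id (x := 𝓝 0)))
        (Or.inr hk)).const_add (a i)
    exact this.eventually (gt_mem_nhds (hab i hi))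
  exact (h.and self_mem_nhdsWithin).exists.imp fun ε h => ⟨h.2, h.1⟩

theorem sub_le_of_forall_mem_Ioo {p q K : ℝ} (hK : 0 ≤ K)
    (h : ∀ u ∈ Ioo p q, ∀ v ∈ Ioo u q, v - u ≤ K) : q - p ≤ K := by
  by_contra! hlt
  have := h (p + (q - p - K) / 3) ⟨by linarith, by linarith⟩ (q - (q - p - K) / 3)
    ⟨by linarith, by linarith⟩
  linarith

theorem exists_mem_Ioo_of_Icc_subset_closure {s : Set ℝ} {a b u v : ℝ}
    (hs : Icc a b ⊆ closure s) (hu : a ≤ u) (hv : v ≤ b) (huv : u < v) :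
    ∃ t ∈ s, t ∈ Ioo u v := by
  have hm : (u + v) / 2 ∈ closure s := hs ⟨by linarith, by linarith⟩
  obtain ⟨t, htuv, hts⟩ :=
    mem_closure_iff_nhds.1 hm _
      (Ioo_mem_nhds (show u < (u + v) / 2 by linarith) (show (u + v) / 2 < v by linarith))
  exact ⟨t, hts, htuv⟩

namespace TopometricOn

variable {X : Type*} [TopologicalSpace X] (T : TopometricOn X)

theorem ptD_le_d {x y : X} {F : Set X} (hy : y ∈ F) : T.ptD x F ≤ T.d x y :=
  iInf₂_le y hy

theorem setD_le_d {x y : X} {F G : Set X} (hx : x ∈ F) (hy : y ∈ G) :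
    T.setD F G ≤ T.d x y :=
  (iInf₂_le x hx).trans (iInf₂_le y hy)

theorem le_setD {r : ℝ≥0∞} {F G : Set X} (h : ∀ x ∈ F, ∀ y ∈ G, r ≤ T.d x y) :
    r ≤ T.setD F G :=
  le_iInf₂ fun x hx => le_iInf₂ (h x hx)

theorem setD_comm (F G : Set X) : T.setD F G = T.setD G F :=
  le_antisymm (T.le_setD fun y hy x hx => T.d_symm x y ▸ T.setD_le_d hx hy)
    (T.le_setD fun x hx y hy => T.d_symm y x ▸ T.setD_le_d hy hx)

theorem setD_le_ptD_add_d_add_ptD (F G : Set X) (x y : X) :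
    T.setD F G ≤ T.ptD x F + T.d x y + T.ptD y G := by
  simp only [ptD, ENNReal.iInf_add, ENNReal.add_iInf]
  refine le_iInf₂ fun w hw => le_iInf₂ fun z hz => (T.setD_le_d hz hw).trans ?_
  calc T.d z w ≤ T.d z x + T.d x w := T.d_triangle _ _ _
    _ ≤ T.d z x + (T.d x y + T.d y w) := by gcongr; exact T.d_triangle _ _ _
    _ = T.d x z + T.d x y + T.d y w := by rw [T.d_symm z x, add_assoc]

theorem le_d_of_ptD_le {F G : Set X} {x y : X} {r r' ε : ℝ≥0∞} (hx : T.ptD x F ≤ r)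
    (hy : T.ptD y G ≤ r') (hr : r + r' ≠ ∞) (h : r + r' + ε ≤ T.setD F G) :
    ε ≤ T.d x y := by
  refine (ENNReal.add_le_add_iff_left hr).1 (h.trans ?_)
  calc T.setD F G ≤ T.ptD x F + T.d x y + T.ptD y G := T.setD_le_ptD_add_d_add_ptD F G x y
    _ ≤ r + T.d x y + r' := by gcongr
    _ = r + r' + T.d x y := add_right_comm _ _ _

/-- The closed metric neighbourhood `B̄(F, r)`. -/
def cthickening (r : ℝ≥0∞) (F : Set X) : Set X := {x | T.ptD x F ≤ r}

theorem le_setD_of_disjoint_cthickening_left {r : ℝ≥0∞} {F G : Set X}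
    (h : Disjoint (T.cthickening r F) G) : r ≤ T.setD F G :=
  T.le_setD fun x hx y hy =>
    (not_le.1 fun hy' => h.notMem_of_mem_right hy hy').le.trans
      ((T.ptD_le_d hx).trans_eq (T.d_symm y x))

theorem le_setD_of_disjoint_cthickening_right {r : ℝ≥0∞} {F G : Set X}
    (h : Disjoint F (T.cthickening r G)) : r ≤ T.setD F G :=
  T.setD_comm G F ▸ T.le_setD_of_disjoint_cthickening_left h.symm

variable {T}

theorem IsNormal.isClosed_cthickening (hT : T.IsNormal) {F : Set X} (hF : IsClosed F)
    {r : ℝ≥0∞} (hr : 0 < r) : IsClosed (T.cthickening r F) :=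
  hT.2 F hF r hr

theorem IsNormal.exists_isClosed_union_eq_univ (hT : T.IsNormal) {P Q : Set X} (hP : IsClosed P)
    (hQ : IsClosed Q) (hPQ : 0 < T.setD P Q) :
    ∃ F' G' : Set X, IsClosed F' ∧ IsClosed G' ∧ F' ∪ G' = univ ∧ Disjoint P G' ∧
      Disjoint F' Q := by
  obtain ⟨U, V, hU, hV, hPU, hQV, hUV⟩ := hT.1 P Q hP hQ hPQ
  exact ⟨Vᶜ, Uᶜ, hV.isClosed_compl, hU.isClosed_compl,
    by rw [← compl_inter, hUV.symm.inter_eq, compl_empty],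
    disjoint_compl_right.mono_left hPU, disjoint_compl_left.mono_right hQV⟩

/-- Unlike in the paper, the set `S` of levels may be infinite. -/
structure LipschitzApprox (T : TopometricOn X) (c : ℝ≥0) where
  S : Set ℝ
  F : ℝ → Set X
  G : ℝ → Set X
  isClosed_F : ∀ α ∈ S, IsClosed (F α)
  isClosed_G : ∀ α ∈ S, IsClosed (G α)
  union_eq_univ : ∀ α ∈ S, F α ∪ G α = univ
  ofReal_sub_lt : ∀ α ∈ S, ∀ β ∈ S, α < β →
    ENNReal.ofReal (β - α) < T.setD (F α) (G β) * (c : ℝ≥0∞)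

namespace LipschitzApprox

variable {T : TopometricOn X} {c : ℝ≥0}

instance : Preorder (LipschitzApprox T c) where
  le A B := A.S ⊆ B.S ∧ ∀ α ∈ A.S, B.F α = A.F α ∧ B.G α = A.G α
  le_refl A := ⟨subset_rfl, fun _ _ => ⟨rfl, rfl⟩⟩
  le_trans A B C hAB hBC := ⟨hAB.1.trans hBC.1, fun α hα =>
    ⟨(hBC.2 α (hAB.1 hα)).1.trans (hAB.2 α hα).1,
      (hBC.2 α (hAB.1 hα)).2.trans (hAB.2 α hα).2⟩⟩

variable {A B : LipschitzApprox T c} {α β : ℝ} {x y : X}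

theorem S_subset_of_le (h : A ≤ B) : A.S ⊆ B.S := h.1

theorem F_eq_of_le (h : A ≤ B) (hα : α ∈ A.S) : B.F α = A.F α := (h.2 α hα).1

theorem G_eq_of_le (h : A ≤ B) (hα : α ∈ A.S) : B.G α = A.G α := (h.2 α hα).2

variable (A)

theorem ofReal_sub_lt_mul_d (hα : α ∈ A.S) (hβ : β ∈ A.S) (hαβ : α < β)
    (hx : x ∈ A.F α) (hy : y ∈ A.G β) : ENNReal.ofReal (β - α) < c * T.d x y :=
  calc ENNReal.ofReal (β - α)
    _ < T.setD (A.F α) (A.G β) * c := A.ofReal_sub_lt α hα β hβ hαβ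
    _ ≤ T.d x y * c := by gcongr; exact T.setD_le_d hx hy
    _ = c * T.d x y := mul_comm _ _

theorem le_of_mem_F_of_mem_G (hα : α ∈ A.S) (hβ : β ∈ A.S) (hF : x ∈ A.F α)
    (hG : x ∈ A.G β) : β ≤ α := by
  by_contra! h
  simpa [T.d_self] using A.ofReal_sub_lt_mul_d hα hβ h hF hG

theorem mem_G_of_notMem_F (hα : α ∈ A.S) (hx : x ∉ A.F α) : x ∈ A.G α :=
  ((A.union_eq_univ α hα).symm ▸ mem_univ x : x ∈ A.F α ∪ A.G α).resolve_left hx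

theorem mem_F_of_notMem_G (hα : α ∈ A.S) (hx : x ∉ A.G α) : x ∈ A.F α :=
  ((A.union_eq_univ α hα).symm ▸ mem_univ x : x ∈ A.F α ∪ A.G α).resolve_right hx

theorem exists_le_insert_of_isClosed {γ : ℝ} (hγ : γ ∉ A.S)
    {F' G' : Set X} (hF' : IsClosed F') (hG' : IsClosed G') (hunion : F' ∪ G' = univ)
    (hlt : ∀ δ ∈ A.S, δ < γ → ENNReal.ofReal (γ - δ) < T.setD (A.F δ) G' * c)
    (hgt : ∀ δ ∈ A.S, γ < δ → ENNReal.ofReal (δ - γ) < T.setD F' (A.G δ) * c) :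
    ∃ B : LipschitzApprox T c, A ≤ B ∧ B.S = insert γ A.S := by
  have hne : ∀ {δ}, δ ∈ A.S → δ ≠ γ := fun hδ => ne_of_mem_of_not_mem hδ hγ
  refine ⟨⟨insert γ A.S, Function.update A.F γ F', Function.update A.G γ G', ?_, ?_, ?_, ?_⟩,
    ⟨subset_insert γ A.S, fun α hα => ?_⟩, rfl⟩
  · rintro α (rfl | hα)
    · simpa using hF'
    · simpa [hne hα] using A.isClosed_F α hα
  · rintro α (rfl | hα)
    · simpa using hG'
    · simpa [hne hα] using A.isClosed_G α hα
  · rintro α (rfl | hα)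
    · simpa using hunion
    · simpa [hne hα] using A.union_eq_univ α hα
  · rintro α (rfl | hα) β (rfl | hβ) hαβ
    · exact absurd hαβ (lt_irrefl _)
    · simpa [hne hβ] using hgt β hβ hαβ
    · simpa [hne hα] using hlt α hα hαβ
    · simpa [hne hα, hne hβ] using A.ofReal_sub_lt α hα β hβ hαβ
  · simp [hne hα]

theorem exists_radii (hc : c ≠ 0) (hA : A.S.Finite) (γ : ℝ) :
    ∃ (r : ℝ → ℝ≥0∞) (ε : ℝ≥0), 0 < ε ∧ (∀ δ, 0 < r δ) ∧ (∀ δ, r δ ≠ ∞) ∧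
      (∀ δ, ENNReal.ofReal |γ - δ| < r δ * c) ∧ ∀ δ ∈ A.S, ∀ δ' ∈ A.S, δ < γ → γ < δ' →
        r δ + r δ' + ε ≤ T.setD (A.F δ) (A.G δ') := by
  have hc' : (c : ℝ≥0∞) ≠ 0 := ENNReal.coe_ne_zero.2 hc
  have hpairs : {p : ℝ × ℝ | p.1 ∈ A.S ∧ p.2 ∈ A.S ∧ p.1 < p.2}.Finite :=
    (hA.prod hA).subset fun p hp => ⟨hp.1, hp.2.1⟩
  obtain ⟨ε, hε, hgap⟩ := ENNReal.exists_pos_forall_add_mul_lt hpairs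
    (a := fun p => ENNReal.ofReal (p.2 - p.1) / c) (b := fun p => T.setD (A.F p.1) (A.G p.2))
    (fun p hp => ENNReal.div_lt_of_lt_mul (A.ofReal_sub_lt _ hp.1 _ hp.2.1 hp.2.2))
    (k := 3) (by norm_num)
  have hε' : (0 : ℝ≥0∞) < ε := ENNReal.coe_pos.2 hε
  refine ⟨fun δ => ENNReal.ofReal |γ - δ| / c + ε, ε, hε, fun δ => hε'.trans_le le_add_self,
    fun δ => ENNReal.add_ne_top.2
      ⟨ENNReal.div_ne_top ENNReal.ofReal_ne_top hc', ENNReal.coe_ne_top⟩,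
    fun δ => ?_, fun δ hδ δ' hδ' hδγ hγδ' => ?_⟩
  · rw [add_mul, ENNReal.div_mul_cancel hc' ENNReal.coe_ne_top]
    exact ENNReal.lt_add_right ENNReal.ofReal_ne_top (mul_ne_zero hε'.ne' hc')
  · have hsplit :
        ENNReal.ofReal (δ' - δ) = ENNReal.ofReal |γ - δ| + ENNReal.ofReal |γ - δ'| := by
      rw [abs_of_pos (sub_pos.2 hδγ), abs_of_neg (sub_neg.2 hγδ'), ← ENNReal.ofReal_add
        (by linarith) (by linarith)]
      ring_nf
    refine le_of_eq_of_le ?_ (hgap (δ, δ') ⟨hδ, hδ', hδγ.trans hγδ'⟩).le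
    simp only [hsplit, ENNReal.add_div]
    ring

theorem exists_le_insert (hT : T.IsNormal) (hc : c ≠ 0) (hA : A.S.Finite) (γ : ℝ) :
    ∃ B : LipschitzApprox T c, A ≤ B ∧ B.S = insert γ A.S := by
  by_cases hγ : γ ∈ A.S
  · exact ⟨A, le_rfl, (insert_eq_of_mem hγ).symm⟩
  obtain ⟨r, ε, hε, hr0, hrtop, hr, hgap⟩ := A.exists_radii hc hA γ
  set P := ⋃ δ ∈ {δ ∈ A.S | δ < γ}, T.cthickening (r δ) (A.F δ)
  set Q := ⋃ δ ∈ {δ ∈ A.S | γ < δ}, T.cthickening (r δ) (A.G δ)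
  have hP : IsClosed P := (hA.subset (sep_subset _ _)).isClosed_biUnion fun δ hδ =>
    hT.isClosed_cthickening (A.isClosed_F δ hδ.1) (hr0 δ)
  have hQ : IsClosed Q := (hA.subset (sep_subset _ _)).isClosed_biUnion fun δ hδ =>
    hT.isClosed_cthickening (A.isClosed_G δ hδ.1) (hr0 δ)
  have hPQ : (ε : ℝ≥0∞) ≤ T.setD P Q := T.le_setD fun x hx y hy => by
    obtain ⟨δ, ⟨hδ, hδγ⟩, hx⟩ := mem_iUnion₂.1 hx
    obtain ⟨δ', ⟨hδ', hγδ'⟩, hy⟩ := mem_iUnion₂.1 hy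
    exact T.le_d_of_ptD_le hx hy (ENNReal.add_ne_top.2 ⟨hrtop δ, hrtop δ'⟩)
      (hgap δ hδ δ' hδ' hδγ hγδ')
  obtain ⟨F', G', hF', hG', hunion, hPG', hF'Q⟩ :=
    hT.exists_isClosed_union_eq_univ hP hQ ((ENNReal.coe_pos.2 hε).trans_le hPQ)
  refine A.exists_le_insert_of_isClosed hγ hF' hG' hunion (fun δ hδ hδγ => ?_)
    (fun δ hδ hγδ => ?_)
  · calc ENNReal.ofReal (γ - δ) = ENNReal.ofReal |γ - δ| := by
          rw [abs_of_pos (sub_pos.2 hδγ)]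
      _ < r δ * c := hr δ
      _ ≤ T.setD (A.F δ) G' * c := by
        gcongr
        exact T.le_setD_of_disjoint_cthickening_left
          (hPG'.mono_left (subset_biUnion_of_mem (u := fun δ => T.cthickening (r δ) (A.F δ))
            (show δ ∈ {δ ∈ A.S | δ < γ} from ⟨hδ, hδγ⟩)))
  · calc ENNReal.ofReal (δ - γ) = ENNReal.ofReal |γ - δ| := by
          rw [abs_sub_comm, abs_of_pos (sub_pos.2 hγδ)]
      _ < r δ * c := hr δ
      _ ≤ T.setD F' (A.G δ) * c := by
        gcongr
        exact T.le_setD_of_disjoint_cthickening_right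
          (hF'Q.mono_right (subset_biUnion_of_mem (u := fun δ => T.cthickening (r δ) (A.G δ))
            (show δ ∈ {δ ∈ A.S | γ < δ} from ⟨hδ, hγδ⟩)))

theorem iInter_F_eq {ι : Type*} {A : ι → LipschitzApprox T c} (hA : Directed (· ≤ ·) A)
    {i : ι} (hα : α ∈ (A i).S) : ⋂ (j) (_ : α ∈ (A j).S), (A j).F α = (A i).F α := by
  refine (iInter₂_subset i hα).antisymm (subset_iInter₂ fun j hj => ?_)
  obtain ⟨k, hik, hjk⟩ := hA i j
  rw [← F_eq_of_le hik hα, F_eq_of_le hjk hj]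

theorem iInter_G_eq {ι : Type*} {A : ι → LipschitzApprox T c} (hA : Directed (· ≤ ·) A)
    {i : ι} (hα : α ∈ (A i).S) : ⋂ (j) (_ : α ∈ (A j).S), (A j).G α = (A i).G α := by
  refine (iInter₂_subset i hα).antisymm (subset_iInter₂ fun j hj => ?_)
  obtain ⟨k, hik, hjk⟩ := hA i j
  rw [← G_eq_of_le hik hα, G_eq_of_le hjk hj]

theorem exists_forall_le_of_directed {ι : Type*} (A : ι → LipschitzApprox T c)
    (hA : Directed (· ≤ ·) A) :
    ∃ B : LipschitzApprox T c, (∀ i, A i ≤ B) ∧ B.S = ⋃ i, (A i).S := by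
  refine ⟨⟨⋃ i, (A i).S, fun α => ⋂ (j) (_ : α ∈ (A j).S), (A j).F α,
    fun α => ⋂ (j) (_ : α ∈ (A j).S), (A j).G α, ?_, ?_, ?_, ?_⟩,
    fun i => ⟨subset_iUnion (fun i => (A i).S) i,
      fun α hα => ⟨iInter_F_eq hA hα, iInter_G_eq hA hα⟩⟩, rfl⟩
  · simp only [mem_iUnion]
    rintro α ⟨i, hα⟩
    simpa only [iInter_F_eq hA hα] using (A i).isClosed_F α hα
  · simp only [mem_iUnion]
    rintro α ⟨i, hα⟩
    simpa only [iInter_G_eq hA hα] using (A i).isClosed_G α hα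
  · simp only [mem_iUnion]
    rintro α ⟨i, hα⟩
    simpa only [iInter_F_eq hA hα, iInter_G_eq hA hα] using (A i).union_eq_univ α hα
  · simp only [mem_iUnion]
    rintro α ⟨i, hα⟩ β ⟨j, hβ⟩ hαβ
    obtain ⟨k, hik, hjk⟩ := hA i j
    have hαk := S_subset_of_le hik hα
    have hβk := S_subset_of_le hjk hβ
    simpa only [iInter_F_eq hA hαk, iInter_G_eq hA hβk] using
      (A k).ofReal_sub_lt α hαk β hβk hαβ

theorem exists_le_union_of_countable (hT : T.IsNormal) (hc : c ≠ 0) (hA : A.S.Finite)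
    {D : Set ℝ} (hD : D.Countable) :
    ∃ B : LipschitzApprox T c, A ≤ B ∧ B.S = A.S ∪ D := by
  rcases D.eq_empty_or_nonempty with rfl | hne
  · exact ⟨A, le_rfl, (union_empty _).symm⟩
  obtain ⟨e, rfl⟩ := hD.exists_eq_range hne
  -- each insertion needs a finite approximation, so finiteness is carried along in a subtype
  have hstep (B : {B : LipschitzApprox T c // B.S.Finite}) (γ : ℝ) :
      ∃ B' : {B : LipschitzApprox T c // B.S.Finite},
        B.1 ≤ B'.1 ∧ B'.1.S = insert γ B.1.S := by
    obtain ⟨B', hle, hS⟩ := B.1.exists_le_insert hT hc B.2 γ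
    exact ⟨⟨B', hS ▸ B.2.insert γ⟩, hle, hS⟩
  choose step hle hS using hstep
  let seq : ℕ → {B : LipschitzApprox T c // B.S.Finite} :=
    fun n => Nat.rec ⟨A, hA⟩ (fun n B => step B (e n)) n
  have hmono : Monotone fun n => (seq n).1 :=
    monotone_nat_of_le_succ fun n => hle (seq n) (e n)
  obtain ⟨B, hB, hBS⟩ := exists_forall_le_of_directed _ hmono.directed_le
  refine ⟨B, hB 0, hBS.trans (subset_antisymm (iUnion_subset fun n => ?_) ?_)⟩
  · induction n with
    | zero => exact subset_union_left
    | succ n ih =>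
      rw [show (seq (n + 1)).1.S = insert (e n) (seq n).1.S from hS (seq n) (e n)]
      exact insert_subset (Or.inr ⟨n, rfl⟩) ih
  · refine union_subset (subset_iUnion (fun n => (seq n).1.S) 0) (range_subset_iff.2 fun n => ?_)
    refine mem_iUnion.2 ⟨n + 1, ?_⟩
    rw [show (seq (n + 1)).1.S = insert (e n) (seq n).1.S from hS (seq n) (e n)]
    exact mem_insert _ _

/-- The level `b` caps the infimum; without it a point in no `F α` would get `sInf ∅ = 0`. -/
noncomputable def infLevel (A : LipschitzApprox T c) (b : ℝ) (x : X) : ℝ :=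
  sInf (insert b {α ∈ A.S | x ∈ A.F α})

section infLevel

variable {a b : ℝ}

theorem bddBelow_levels (hS : A.S ⊆ Icc a b) (x : X) :
    BddBelow (insert b {α ∈ A.S | x ∈ A.F α}) :=
  (bddBelow_Icc.mono ((sep_subset _ _).trans hS)).insert b

theorem infLevel_le_right (hS : A.S ⊆ Icc a b) (x : X) : A.infLevel b x ≤ b :=
  csInf_le (A.bddBelow_levels hS x) (mem_insert _ _)

theorem infLevel_le (hS : A.S ⊆ Icc a b) (hα : α ∈ A.S) (hx : x ∈ A.F α) :
    A.infLevel b x ≤ α :=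
  csInf_le (A.bddBelow_levels hS x) (mem_insert_of_mem _ ⟨hα, hx⟩)

theorem le_infLevel (hS : A.S ⊆ Icc a b) (hα : α ∈ A.S) (hx : x ∈ A.G α) :
    α ≤ A.infLevel b x :=
  le_csInf (insert_nonempty _ _) <| forall_mem_insert.2
    ⟨(hS hα).2, fun _ hβ => A.le_of_mem_F_of_mem_G hβ.1 hα hβ.2 hx⟩

theorem infLevel_mem_Icc (hS : A.S ⊆ Icc a b) (hab : a ≤ b) (x : X) :
    A.infLevel b x ∈ Icc a b :=
  ⟨le_csInf (insert_nonempty _ _) (forall_mem_insert.2 ⟨hab, fun _ hβ => (hS hβ.1).1⟩),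
    A.infLevel_le_right hS x⟩

theorem notMem_F_of_lt_infLevel (hS : A.S ⊆ Icc a b) (hα : α ∈ A.S)
    (h : α < A.infLevel b x) : x ∉ A.F α :=
  fun hx => (A.infLevel_le hS hα hx).not_gt h

theorem notMem_G_of_infLevel_lt (hS : A.S ⊆ Icc a b) (hα : α ∈ A.S)
    (h : A.infLevel b x < α) : x ∉ A.G α :=
  fun hx => (A.le_infLevel hS hα hx).not_gt h

theorem lowerSemicontinuous_infLevel (hS : A.S ⊆ Icc a b) (hab : a ≤ b)
    (hdense : Icc a b ⊆ closure A.S) : LowerSemicontinuous (A.infLevel b) := by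
  intro x r hr
  rcases lt_or_ge r a with hra | har
  · exact Eventually.of_forall fun y => hra.trans_le (A.infLevel_mem_Icc hS hab y).1
  obtain ⟨α, hα, hrα, hαx⟩ :=
    exists_mem_Ioo_of_Icc_subset_closure hdense har (A.infLevel_le_right hS x) hr
  filter_upwards [(A.isClosed_F α hα).isOpen_compl.mem_nhds
    (A.notMem_F_of_lt_infLevel hS hα hαx)] with y hy
  exact hrα.trans_le (A.le_infLevel hS hα (A.mem_G_of_notMem_F hα hy))

theorem upperSemicontinuous_infLevel (hS : A.S ⊆ Icc a b) (hab : a ≤ b)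
    (hdense : Icc a b ⊆ closure A.S) : UpperSemicontinuous (A.infLevel b) := by
  intro x r hr
  rcases lt_or_ge b r with hbr | hrb
  · exact Eventually.of_forall fun y => (A.infLevel_le_right hS y).trans_lt hbr
  obtain ⟨α, hα, hxα, hαr⟩ :=
    exists_mem_Ioo_of_Icc_subset_closure hdense (A.infLevel_mem_Icc hS hab x).1 hrb hr
  filter_upwards [(A.isClosed_G α hα).isOpen_compl.mem_nhds
    (A.notMem_G_of_infLevel_lt hS hα hxα)] with y hy
  exact (A.infLevel_le hS hα (A.mem_F_of_notMem_G hα hy)).trans_lt hαr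

theorem continuous_infLevel (hS : A.S ⊆ Icc a b) (hab : a ≤ b)
    (hdense : Icc a b ⊆ closure A.S) : Continuous (A.infLevel b) :=
  continuous_iff_lower_upperSemicontinuous.2
    ⟨A.lowerSemicontinuous_infLevel hS hab hdense, A.upperSemicontinuous_infLevel hS hab hdense⟩

theorem infLevel_sub_le (hS : A.S ⊆ Icc a b) (hab : a ≤ b)
    (hdense : Icc a b ⊆ closure A.S) (x y : X) (h : c * T.d x y ≠ ∞) :
    A.infLevel b y - A.infLevel b x ≤ (c * T.d x y).toReal := by
  refine sub_le_of_forall_mem_Ioo ENNReal.toReal_nonneg fun u hu v hv => ?_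
  have hya := A.infLevel_mem_Icc hS hab y
  obtain ⟨α, hα, hxα, hαu⟩ := exists_mem_Ioo_of_Icc_subset_closure hdense
    (A.infLevel_mem_Icc hS hab x).1 (hu.2.le.trans hya.2) hu.1
  obtain ⟨β, hβ, hvβ, hβy⟩ := exists_mem_Ioo_of_Icc_subset_closure hdense
    ((A.infLevel_mem_Icc hS hab x).1.trans (hu.1.trans hv.1).le) hya.2 hv.2
  have hlt := A.ofReal_sub_lt_mul_d hα hβ (by linarith [hv.1])
    (A.mem_F_of_notMem_G hα (A.notMem_G_of_infLevel_lt hS hα hxα))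
    (A.mem_G_of_notMem_F hβ (A.notMem_F_of_lt_infLevel hS hβ hβy))
  have := (ENNReal.ofReal_lt_iff_lt_toReal (by linarith [hv.1]) h).1 hlt
  linarith [hv.1]

theorem edist_infLevel_le (hS : A.S ⊆ Icc a b) (hab : a ≤ b)
    (hdense : Icc a b ⊆ closure A.S) (x y : X) :
    edist (A.infLevel b x) (A.infLevel b y) ≤ c * T.d x y := by
  rcases eq_or_ne ((c : ℝ≥0∞) * T.d x y) ∞ with h | h
  · exact h ▸ le_top
  have h' : (c : ℝ≥0∞) * T.d y x ≠ ∞ := by rwa [T.d_symm]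
  rw [edist_dist, Real.dist_eq]
  refine ENNReal.ofReal_le_of_le_toReal
    (abs_sub_le_iff.2 ⟨?_, A.infLevel_sub_le hS hab hdense x y h⟩)
  simpa only [T.d_symm y x] using A.infLevel_sub_le hS hab hdense y x h'

end infLevel

end LipschitzApprox

end TopometricOn

open TopometricOn LipschitzApprox

/-- in a normal topometric space, every finite `c`-Lipschitz approximation
approximates a continuous `c`-Lipschitz function with values in the convex hull of `S`. -/
theorem approximation_approximates_function {X : Type*} [TopologicalSpace X]
    (T : TopometricOn X) (hT : T.IsNormal) (S : Finset ℝ) (hS : S.Nonempty)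
    (F G : ℝ → Set X) (c : ℝ≥0)
    (hF : ∀ α ∈ S, IsClosed (F α)) (hG : ∀ α ∈ S, IsClosed (G α))
    (htotal : ∀ α ∈ S, F α ∪ G α = Set.univ)
    (happ : ∀ α ∈ S, ∀ β ∈ S, α < β →
      ENNReal.ofReal (β - α) < T.setD (F α) (G β) * (c : ℝ≥0∞)) :
    ∃ f : X → ℝ, Continuous f ∧ (∀ x y, edist (f x) (f y) ≤ (c : ℝ≥0∞) * T.d x y) ∧
      (∀ x, f x ∈ convexHull ℝ (S : Set ℝ)) ∧
      (∀ α ∈ S, ∀ x ∈ F α, f x ≤ α) ∧ (∀ α ∈ S, ∀ x ∈ G α, α ≤ f x) := by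
  rcases eq_or_ne c 0 with rfl | hc
  -- for `c = 0` no two levels can be compared, so `S` is a singleton
  · refine ⟨fun _ => S.min' hS, continuous_const, fun x y => by simp,
      fun _ => subset_convexHull ℝ _ (S.min'_mem hS), fun α hα _ _ => S.min'_le α hα,
      fun α hα _ _ => ?_⟩
    by_contra! h
    simpa using happ _ (S.min'_mem hS) α hα h
  set a := S.min' hS
  set b := S.max' hS
  have hab : a ≤ b := S.min'_le _ (S.max'_mem hS)
  have hSab : (S : Set ℝ) ⊆ Icc a b := fun α hα => ⟨S.min'_le α hα, S.le_max' α hα⟩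
  let A : LipschitzApprox T c := ⟨S, F, G, hF, hG, htotal, happ⟩
  obtain ⟨D, hDab, hD, hdense⟩ :=
    (TopologicalSpace.IsSeparable.of_separableSpace (Icc a b)).exists_countable_dense_subset
  obtain ⟨B, hAB, hBS⟩ := A.exists_le_union_of_countable hT hc S.finite_toSet hD
  have hBab : B.S ⊆ Icc a b := hBS ▸ union_subset hSab hDab
  have hBdense : Icc a b ⊆ closure B.S := hdense.trans (closure_mono (hBS ▸ subset_union_right))
  refine ⟨B.infLevel b, B.continuous_infLevel hBab hab hBdense,
    B.edist_infLevel_le hBab hab hBdense, fun x => ?_, fun α hα x hx => ?_,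
    fun α hα x hx => ?_⟩
  · exact segment_subset_convexHull (S.min'_mem hS) (S.max'_mem hS)
      ((segment_eq_Icc hab).symm ▸ B.infLevel_mem_Icc hBab hab x)
  · exact B.infLevel_le hBab (S_subset_of_le hAB hα) ((F_eq_of_le hAB hα).symm ▸ hx)
  · exact B.le_infLevel hBab (S_subset_of_le hAB hα) ((G_eq_of_le hAB hα).symm ▸ hx)
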